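/- Let T and T' be distinct binary trees with n leaves each. Let i be the greatest index such that rd_T(i) ≠ rd_{T'}(i). Then ld_T(i) = ld_{T'}(i). -/

import Mathlib

/-!
The left depth of a leaf is determined by the right depths of the leaves after it: `ld_T(i)` is
the number of `j` with `i < j < n` at which `rd_T` attains its minimum over `(i, j]`. Indeed,
each left step on the path to leaf `i` has a right sibling subtree whose leftmost leaf `j` has
`rd_T(j)` equal to the right depth of that step's parent plus one, and these leaves are exactly
the running minima of `rd_T` after `i`. Hence two trees whose right depths agree after `i` also
agree in the left depth of `i`.
-/

/-- Binary trees: every internal vertex has exactly a left and a right child. -/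
inductive BTree : Type where
  | leaf : BTree
  | node : BTree → BTree → BTree

namespace BTree

/-- Number of leaves. -/
def numLeaves : BTree → ℕ
  | leaf => 1
  | node l r => l.numLeaves + r.numLeaves

/-- Addresses of the leaves in left-to-right order, as words over `{0,1}`;
`false` records a left step (0) and `true` a right step (1). -/
def addrs : BTree → List (List Bool)
  | leaf => [[]]
  | node l r => (l.addrs.map (fun w => false :: w)) ++ (r.addrs.map (fun w => true :: w))

/-- Address of the `i`-th leaf (0-indexed, left to right). -/
def addr (T : BTree) (i : ℕ) : List Bool := T.addrs.getD i []

/-- Left depth of the `i`-th leaf: number of left steps (0's) in its address. -/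
def ld (T : BTree) (i : ℕ) : ℕ := (T.addr i).count false

/-- Right depth of the `i`-th leaf: number of right steps (1's) in its address. -/
def rd (T : BTree) (i : ℕ) : ℕ := (T.addr i).count true

/-- Total depth of the `i`-th leaf. -/
def depth (T : BTree) (i : ℕ) : ℕ := (T.addr i).length

end BTree

open Finset

def runningMinima (f : ℕ → ℕ) (i n : ℕ) : Finset ℕ :=
  {j ∈ Ioo i n | ∀ k ∈ Ioc i j, f j ≤ f k}

section runningMinima

variable {f g : ℕ → ℕ} {i m n : ℕ}

theorem runningMinima_congr (h : ∀ j, i < j → j < n → f j = g j) :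
    runningMinima f i n = runningMinima g i n := by
  refine filter_congr fun j hj => ?_
  obtain ⟨hij, hjn⟩ := mem_Ioo.mp hj
  refine forall₂_congr fun k hk => ?_
  obtain ⟨hik, hkj⟩ := mem_Ioc.mp hk
  rw [h j hij hjn, h k hik (hkj.trans_lt hjn)]

theorem runningMinima_shift (c : ℕ) (h : ∀ j < n, g (m + j) = f j + c) :
    runningMinima g (m + i) (m + n) = (runningMinima f i n).map (addLeftEmbedding m) := by
  rw [runningMinima, runningMinima, ← map_add_left_Ioo, filter_map]
  refine congr_arg _ (filter_congr fun j hj => ?_)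
  have hjn := (mem_Ioo.mp hj).2
  simp only [Function.comp_apply, addLeftEmbedding_apply, ← map_add_left_Ioc, forall_mem_map]
  refine forall₂_congr fun k hk => ?_
  rw [h j hjn, h k ((mem_Ioc.mp hk).2.trans_lt hjn), add_le_add_iff_right]

theorem runningMinima_eq_insert (him : i < m) (hmn : m < n)
    (hmin : ∀ k ∈ Ioc i m, g m ≤ g k) (hlt : ∀ j ∈ Ioo m n, g m < g j) :
    runningMinima g i n = insert m (runningMinima g i m) := by
  ext j
  simp only [runningMinima, mem_insert, mem_filter, mem_Ioo]
  rcases lt_trichotomy j m with hjm | rfl | hmj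
  · simp only [hjm.ne, false_or, hjm.trans hmn, hjm, and_true]
  · exact iff_of_true ⟨⟨him, hmn⟩, hmin⟩ (Or.inl rfl)
  · refine iff_of_false (fun ⟨⟨_, hjn⟩, hj⟩ => ?_)
      (by rintro (rfl | ⟨⟨_, hjm⟩, _⟩) <;> omega)
    exact (hlt j (mem_Ioo.mpr ⟨hmj, hjn⟩)).not_ge (hj m (mem_Ioc.mpr ⟨him, hmj.le⟩))

end runningMinima

namespace BTree

theorem numLeaves_pos (T : BTree) : 0 < T.numLeaves := by
  induction T with
  | leaf => exact Nat.one_pos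
  | node l r ihl _ => exact Nat.add_pos_left ihl _

theorem length_addrs (T : BTree) : T.addrs.length = T.numLeaves := by
  induction T with
  | leaf => rfl
  | node l r ihl ihr => simp [addrs, numLeaves, ihl, ihr]

section node

variable (L R : BTree) {i : ℕ}

theorem addr_node_of_lt (h : i < L.numLeaves) : (node L R).addr i = false :: L.addr i := by
  have hi : i < L.addrs.length := L.length_addrs ▸ h
  rw [addr, addrs, List.getD_append _ _ _ _ (by simpa using hi),
    List.getD_eq_getElem _ _ (by simpa using hi), List.getElem_map, addr,
    List.getD_eq_getElem _ _ hi]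

theorem addr_node_add (h : i < R.numLeaves) :
    (node L R).addr (L.numLeaves + i) = true :: R.addr i := by
  have hi : i < R.addrs.length := R.length_addrs ▸ h
  rw [addr, addrs, List.getD_append_right _ _ _ _ (by simp [length_addrs]),
    List.getD_eq_getElem _ _ (by simpa [length_addrs] using hi), List.getElem_map, addr,
    List.getD_eq_getElem _ _ (by simpa [length_addrs] using hi)]
  simp [length_addrs]

theorem ld_node_of_lt (h : i < L.numLeaves) : (node L R).ld i = L.ld i + 1 := by
  simp [ld, addr_node_of_lt L R h]

theorem rd_node_of_lt (h : i < L.numLeaves) : (node L R).rd i = L.rd i := by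
  simp [rd, addr_node_of_lt L R h]

theorem ld_node_add (h : i < R.numLeaves) : (node L R).ld (L.numLeaves + i) = R.ld i := by
  simp [ld, addr_node_add L R h]

theorem rd_node_add (h : i < R.numLeaves) : (node L R).rd (L.numLeaves + i) = R.rd i + 1 := by
  simp [rd, addr_node_add L R h]

end node

theorem rd_zero (T : BTree) : T.rd 0 = 0 := by
  induction T with
  | leaf => rfl
  | node L R ihl _ => rw [rd_node_of_lt L R L.numLeaves_pos, ihl]

theorem rd_pos (T : BTree) {k : ℕ} (hk : 0 < k) (hkn : k < T.numLeaves) : 0 < T.rd k := by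
  induction T generalizing k with
  | leaf => exact absurd hkn (by simp [numLeaves]; omega)
  | node L R ihl _ =>
    rcases lt_or_ge k L.numLeaves with hkL | hkL
    · rw [rd_node_of_lt L R hkL]
      exact ihl hk hkL
    · obtain ⟨k, rfl⟩ := Nat.exists_eq_add_of_le hkL
      rw [rd_node_add L R (by simpa [numLeaves] using hkn)]
      exact Nat.succ_pos _

theorem ld_eq_card_runningMinima (T : BTree) {i : ℕ} (hi : i < T.numLeaves) :
    T.ld i = #(runningMinima T.rd i T.numLeaves) := by
  induction T generalizing i with
  | leaf =>
    obtain rfl : i = 0 := by simpa [numLeaves] using hi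
    rfl
  | node L R ihL ihR =>
    rcases lt_or_ge i L.numLeaves with hiL | hiL
    · -- the leftmost leaf of `R` is the last running minimum: its right depth is 1
      have hR := R.numLeaves_pos
      have hmin : ∀ k ∈ Ioc i L.numLeaves, (node L R).rd L.numLeaves ≤ (node L R).rd k := by
        intro k hk
        obtain ⟨hik, hkL⟩ := mem_Ioc.mp hk
        rcases hkL.lt_or_eq with hkL | rfl
        · rw [← add_zero L.numLeaves, rd_node_add L R hR, rd_zero, rd_node_of_lt L R hkL]
          exact L.rd_pos (by omega) hkL
        · exact le_rfl
      have hlt : ∀ j ∈ Ioo L.numLeaves (node L R).numLeaves,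
          (node L R).rd L.numLeaves < (node L R).rd j := by
        intro j hj
        obtain ⟨j, rfl⟩ := Nat.exists_eq_add_of_lt (mem_Ioo.mp hj).1
        have hjR : j + 1 < R.numLeaves := by
          have := (mem_Ioo.mp hj).2
          simp only [numLeaves] at this
          omega
        rw [← add_zero L.numLeaves, rd_node_add L R hR, add_zero, add_assoc,
          rd_node_add L R hjR, rd_zero, add_lt_add_iff_right]
        exact R.rd_pos (Nat.succ_pos _) hjR
      rw [runningMinima_eq_insert hiL (by simp [numLeaves, hR]) hmin hlt,
        card_insert_of_notMem (by simp [runningMinima]), ld_node_of_lt L R hiL, ihL hiL,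
        runningMinima_congr fun j _ hj => rd_node_of_lt L R hj]
    · obtain ⟨i, rfl⟩ := Nat.exists_eq_add_of_le hiL
      have hiR : i < R.numLeaves := by simpa [numLeaves] using hi
      rw [ld_node_add L R hiR, ihR hiR, numLeaves,
        runningMinima_shift 1 fun j hj => rd_node_add L R hj, card_map]

end BTree

theorem stmt3_general (T T' : BTree) (n i : ℕ)
    (hT : T.numLeaves = n) (hT' : T'.numLeaves = n)
    (hi : i < n)
    (hgreatest : ∀ j, i < j → j < n → T.rd j = T'.rd j) :
    T.ld i = T'.ld i := by
  subst hT
  rw [T.ld_eq_card_runningMinima hi, T'.ld_eq_card_runningMinima (hT' ▸ hi), hT',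
    runningMinima_congr hgreatest]

/-- For distinct binary trees with `n` leaves, at the greatest index where the
right depths differ, the left depths coincide. -/
theorem stmt3 (T T' : BTree) (n i : ℕ)
    (hT : T.numLeaves = n) (hT' : T'.numLeaves = n) (hne : T ≠ T')
    (hi : i < n) (hdiff : T.rd i ≠ T'.rd i)
    (hgreatest : ∀ j, i < j → j < n → T.rd j = T'.rd j) :
    T.ld i = T'.ld i :=
  stmt3_general T T' n i hT hT' hi hgreatest
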